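/- arXiv:1802.00035 — 2 statements merged into one kernel-verified Lean document; each statement's English description precedes it below -/
import Mathlib

section
/- Let c ∈ ℝ \ {0}. For every integer l ≥ 0 one has the strict positivity 2 (d₁ d₂/(a+b)) · (a^{2l+3} − b^{2l+3}) · (a^{2l+2} − b^{2l+2}) + (d₁ a^{2l+2} + d₂ b^{2l+2})² > 0. -/
noncomputable def aDP (t : ℝ) : ℝ := (3 + Real.sqrt 5) / (2 * t)
noncomputable def bDP (t : ℝ) : ℝ := (3 - Real.sqrt 5) / (2 * t)
noncomputable def d1DP (c : ℝ) : ℝ := -(3 + Real.sqrt 5) / (18 * c)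
noncomputable def d2DP (c : ℝ) : ℝ := (-3 + Real.sqrt 5) / (18 * c)

/-! With `φ, ψ = (1 ± √5)/2` one has `a = φ²/t`, `b = ψ²/t` and `d₁d₂/(a+b) = t/(243c²)`.
The first summand is then `2/(243c²) · t(a^(m+1) − b^(m+1))(a^m − b^m)` with `m = 2l+2`, and
`t(a^(m+1) − b^(m+1))(a^m − b^m) = (φ^(2m+2) − ψ^(2m+2))(φ^(2m) − ψ^(2m)) / t^(2m) > 0`
because `0 < ψ² < φ²`, whatever the sign of `t`. The second summand is a square. -/

open Real goldenRatio

lemma goldenConj_sq_lt_goldenRatio_sq : ψ ^ 2 < φ ^ 2 := by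
  rw [goldenRatio_sq, goldenConj_sq]
  linarith [goldenConj_neg, goldenRatio_pos]

lemma aDP_eq (t : ℝ) : aDP t = φ ^ 2 / t := by
  rw [aDP, goldenRatio_sq, goldenRatio]
  ring

lemma bDP_eq (t : ℝ) : bDP t = ψ ^ 2 / t := by
  rw [bDP, goldenConj_sq, goldenConj]
  ring

lemma d1DP_mul_d2DP_div_aDP_add_bDP (c t : ℝ) :
    d1DP c * d2DP c / (aDP t + bDP t) = t / (243 * c ^ 2) := by
  have hab : aDP t + bDP t = 3 / t := by
    rw [aDP, bDP]
    ring
  rw [hab, div_div_eq_mul_div, d1DP, d2DP]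
  linear_combination (-t / (972 * c ^ 2)) * Real.sq_sqrt (show (0 : ℝ) ≤ 5 by norm_num)

lemma mul_div_pow_sub_div_pow_mul_pos {A B t : ℝ} (hB : 0 ≤ B) (hBA : B < A) (ht : t ≠ 0)
    {m : ℕ} (hm : m ≠ 0) :
    0 < t * ((A / t) ^ (m + 1) - (B / t) ^ (m + 1)) * ((A / t) ^ m - (B / t) ^ m) := by
  have h : t * ((A / t) ^ (m + 1) - (B / t) ^ (m + 1)) * ((A / t) ^ m - (B / t) ^ m)
      = (A ^ (m + 1) - B ^ (m + 1)) * (A ^ m - B ^ m) / (t ^ m) ^ 2 := by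
    simp only [div_pow]
    field_simp
    ring
  rw [h]
  have h₁ := pow_lt_pow_left₀ hBA hB m.succ_ne_zero
  have h₂ := pow_lt_pow_left₀ hBA hB hm
  exact div_pos (mul_pos (sub_pos.2 h₁) (sub_pos.2 h₂)) (by positivity)

/-- For every `l ≥ 0`,
`2 (d₁d₂/(a+b)) (a^{2l+3} − b^{2l+3}) (a^{2l+2} − b^{2l+2})
  + (d₁ a^{2l+2} + d₂ b^{2l+2})² > 0`,
where `t` is the real cube root of `c ≠ 0`. -/
theorem stmt16 (c t : ℝ) (hc : c ≠ 0) (ht : t ^ 3 = c) (l : ℕ) :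
    0 < 2 * (d1DP c * d2DP c / (aDP t + bDP t)) *
          (aDP t ^ (2 * l + 3) - bDP t ^ (2 * l + 3)) *
          (aDP t ^ (2 * l + 2) - bDP t ^ (2 * l + 2)) +
        (d1DP c * aDP t ^ (2 * l + 2) + d2DP c * bDP t ^ (2 * l + 2)) ^ 2 := by
  have ht0 : t ≠ 0 := by
    rintro rfl
    exact hc (by simpa using ht.symm)
  have key := mul_div_pow_sub_div_pow_mul_pos (sq_nonneg ψ) goldenConj_sq_lt_goldenRatio_sq ht0
    (m := 2 * l + 2) (by omega)
  refine add_pos_of_pos_of_nonneg ?_ (sq_nonneg _)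
  rw [d1DP_mul_d2DP_div_aDP_add_bDP, aDP_eq, bDP_eq]
  convert mul_pos (by positivity : 0 < 2 / (243 * c ^ 2)) key using 1
  ring
end

section
/- For each fixed odd integer n ≥ 1, the quantity |S_n(c)| tends to +∞ as the parameter c tends to 0 with c ≠ 0, where S_n(c) denotes the alternating sum S_n computed from the coefficient sequence (c_m) associated with the parameter c. -/
/-- The coefficient sequence of the Degasperis–Procesi conserved quantities:
`c₀ = −1/(3c)`, `c₁ = −2/(9ct)`, `c_{m+2} = −t⁻² c_m + 3 t⁻¹ c_{m+1}`,
where `t` is the real cube root of `c`. -/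
noncomputable def cseq (c t : ℝ) : ℕ → ℝ
  | 0 => -1 / (3 * c)
  | 1 => -2 / (9 * c * t)
  | n + 2 => -(t ^ 2)⁻¹ * cseq c t n + 3 * t⁻¹ * cseq c t (n + 1)

/-- For odd `n`, the alternating sum `S_n = Σ_{k=0}^{n+1} (−1)^{(n+1)/2−k} c_k c_{n+1−k}`. -/
noncomputable def Sseq (c t : ℝ) (n : ℕ) : ℝ :=
  ∑ k ∈ Finset.range (n + 2),
    (-1 : ℝ) ^ ((((n : ℤ) + 1) / 2) - (k : ℤ)) * cseq c t k * cseq c t (n + 1 - k)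

/-- The normalized coefficient sequence: `cseq c t m = a m / (c * t^m)`. -/
noncomputable def aa : ℕ → ℝ
  | 0 => -1/3
  | 1 => -2/9
  | n + 2 => 3 * aa (n + 1) - aa n

lemma aa_rec (n : ℕ) : aa (n + 2) = 3 * aa (n + 1) - aa n := rfl

lemma aa_aux : ∀ n, aa (n + 2) ≤ aa (n + 1) ∧ aa (n + 1) < 0 := by
  intro n
  induction n with
  | zero =>
      constructor
      · show (3 * aa 1 - aa 0 : ℝ) ≤ aa 1
        norm_num [aa]
      · norm_num [aa]
  | succ n ih =>
      obtain ⟨h1, h2⟩ := ih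
      have h3 : aa (n + 2) < 0 := lt_of_le_of_lt h1 h2
      refine ⟨?_, h3⟩
      rw [aa_rec (n + 1)]
      linarith

lemma aa_neg : ∀ n, aa n < 0 := by
  intro n
  match n with
  | 0 => norm_num [aa]
  | (n + 1) => exact (aa_aux n).2

lemma cseq_eq (c t : ℝ) (hc : c ≠ 0) (htne : t ≠ 0) :
    ∀ m, cseq c t m = aa m / (c * t ^ m) := by
  suffices h : ∀ m, cseq c t m = aa m / (c * t ^ m) ∧
      cseq c t (m + 1) = aa (m + 1) / (c * t ^ (m + 1)) from fun m => (h m).1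
  intro m
  induction m with
  | zero =>
      constructor
      · show (-1 / (3 * c) : ℝ) = aa 0 / (c * t ^ 0)
        rw [show aa 0 = -1/3 from rfl]
        field_simp
      · show (-2 / (9 * c * t) : ℝ) = aa 1 / (c * t ^ 1)
        rw [show aa 1 = -2/9 from rfl]
        field_simp
  | succ m ih =>
      refine ⟨ih.2, ?_⟩
      show -(t ^ 2)⁻¹ * cseq c t m + 3 * t⁻¹ * cseq c t (m + 1) = _
      rw [ih.1, ih.2, aa_rec]
      field_simp
      ring

/-- Alternating self-convolution of `aa`. -/
noncomputable def Vc (N : ℕ) : ℝ := ∑ k ∈ Finset.range (N + 1), (-1 : ℝ) ^ k * aa k * aa (N - k)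

/-- Shifted alternating convolution. -/
noncomputable def Wc (N : ℕ) : ℝ := ∑ k ∈ Finset.range (N + 1), (-1 : ℝ) ^ k * aa k * aa (N + 1 - k)

lemma Vsucc (N : ℕ) : Vc (N + 1) = Wc N + (-1 : ℝ) ^ (N + 1) * aa (N + 1) * aa 0 := by
  simp only [Vc, Wc]
  rw [Finset.sum_range_succ, Nat.sub_self]

lemma Wsucc (N : ℕ) : Wc (N + 1) = 3 * Wc N - Vc N + (-1 : ℝ) ^ (N + 1) * aa (N + 1) * aa 1 := by
  simp only [Vc, Wc]
  rw [Finset.sum_range_succ]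
  have h1 : ∀ k ∈ Finset.range (N + 1),
      (-1 : ℝ) ^ k * aa k * aa (N + 1 + 1 - k)
        = 3 * ((-1 : ℝ) ^ k * aa k * aa (N + 1 - k)) - ((-1 : ℝ) ^ k * aa k * aa (N - k)) := by
    intro k hk
    simp only [Finset.mem_range] at hk
    have e2 : N + 1 + 1 - k = (N - k) + 2 := by omega
    have e1 : N + 1 - k = (N - k) + 1 := by omega
    rw [e2, e1, aa_rec]
    ring
  rw [Finset.sum_congr rfl h1, Finset.sum_sub_distrib, ← Finset.mul_sum]
  have h2 : N + 1 + 1 - (N + 1) = 1 := by omega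
  rw [h2]

lemma key : ∀ N, Vc N = (1 + (-1 : ℝ) ^ N) * (-7/54 * aa N - 1/18 * aa (N + 1)) ∧
    Wc N = (1/18 - (-1 : ℝ) ^ N / 18) * aa N + (-8/27 - (-1 : ℝ) ^ N / 27) * aa (N + 1) := by
  intro N
  induction N with
  | zero =>
      constructor <;> norm_num [Vc, Wc, aa]
  | succ N ih =>
      obtain ⟨hV, hW⟩ := ih
      rw [Vsucc, Wsucc, hV, hW, aa_rec, show aa 0 = -1/3 from rfl, show aa 1 = -2/9 from rfl]
      constructor <;> ring

lemma Vc_pos (M : ℕ) : 0 < Vc (2 * M) := by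
  have h := (key (2 * M)).1
  have he : ((-1 : ℝ)) ^ (2 * M) = 1 := by
    rw [pow_mul]; norm_num
  rw [h, he]
  have h1 := aa_neg (2 * M)
  have h2 := aa_neg (2 * M + 1)
  nlinarith

lemma main_sum (c t : ℝ) (hc : c ≠ 0) (htne : t ≠ 0) (m : ℕ) :
    Sseq c t (2 * m + 1) = ((-1 : ℝ) ^ (m + 1) / (c ^ 2 * t ^ (2 * m + 2))) * Vc (2 * m + 2) := by
  have hterm : ∀ k ∈ Finset.range (2 * m + 1 + 2),
      (-1 : ℝ) ^ ((((2 * m + 1 : ℕ) : ℤ) + 1) / 2 - (k : ℤ)) * cseq c t k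
          * cseq c t (2 * m + 1 + 1 - k)
        = ((-1 : ℝ) ^ (m + 1) / (c ^ 2 * t ^ (2 * m + 2)))
            * ((-1 : ℝ) ^ k * aa k * aa (2 * m + 2 - k)) := by
    intro k hk
    simp only [Finset.mem_range] at hk
    have hz : (((2 * m + 1 : ℕ) : ℤ) + 1) / 2 - (k : ℤ) = ((m + 1 : ℕ) : ℤ) - (k : ℤ) := by
      push_cast; omega
    have h1 : 2 * m + 1 + 1 - k = 2 * m + 2 - k := by omega
    rw [hz, zpow_sub₀ (by norm_num : (-1 : ℝ) ≠ 0), zpow_natCast, zpow_natCast,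
      cseq_eq c t hc htne k, cseq_eq c t hc htne (2 * m + 1 + 1 - k), h1]
    have h3 : (-1 : ℝ) ^ (m + 1) / (-1 : ℝ) ^ k = (-1 : ℝ) ^ (m + 1) * (-1 : ℝ) ^ k := by
      rw [div_eq_mul_inv, ← inv_pow, inv_neg, inv_one]
    have h2 : t ^ (2 * m + 2) = t ^ k * t ^ (2 * m + 2 - k) := by
      rw [← pow_add]; congr 1; omega
    rw [h3, h2]
    field_simp
  rw [Sseq, Finset.sum_congr rfl hterm, ← Finset.mul_sum]
  congr 1

/-- For each fixed odd `n ≥ 1`, `|S_n(c)| → +∞` as `c → 0`, `c ≠ 0`;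
here `t : ℝ → ℝ` is the real cube-root function, `t(c)³ = c`. -/
theorem stmt18 (n : ℕ) (hn : Odd n) (hn1 : 1 ≤ n) (t : ℝ → ℝ) (ht : ∀ c : ℝ, t c ^ 3 = c) :
    Filter.Tendsto (fun c : ℝ => |Sseq c (t c) n|)
      (nhdsWithin 0 {(0 : ℝ)}ᶜ) Filter.atTop := by
  obtain ⟨m, hm⟩ := hn
  subst hm
  set K : ℝ := Vc (2 * m + 2) with hKdef
  have hK : 0 < K := by
    have := Vc_pos (m + 1)
    rwa [show 2 * (m + 1) = 2 * m + 2 by ring] at this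
  have htne : ∀ c : ℝ, c ≠ 0 → t c ≠ 0 := by
    intro c hc h0
    apply hc
    rw [← ht c, h0]
    ring
  -- the denominator function
  set g : ℝ → ℝ := fun c => |c ^ 2 * t c ^ (2 * m + 2)| with hgdef
  have heq : ∀ᶠ c in nhdsWithin (0:ℝ) {(0:ℝ)}ᶜ,
      K * (g c)⁻¹ = |Sseq c (t c) (2 * m + 1)| := by
    filter_upwards [self_mem_nhdsWithin] with c hc
    have hc0 : c ≠ 0 := hc
    rw [main_sum c (t c) hc0 (htne c hc0) m, abs_mul, abs_div, abs_pow, abs_neg, abs_one,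
      one_pow, abs_of_pos hK, hgdef]
    rw [div_eq_mul_inv, one_mul, mul_comm]
  have hg0 : Filter.Tendsto g (nhdsWithin (0:ℝ) {(0:ℝ)}ᶜ) (nhdsWithin 0 (Set.Ioi 0)) := by
    rw [tendsto_nhdsWithin_iff]
    constructor
    · -- tendsto nhds 0 via squeeze
      have hb : ∀ᶠ c : ℝ in nhdsWithin (0:ℝ) {(0:ℝ)}ᶜ, g c ≤ c ^ 2 := by
        have h1 : ∀ᶠ c : ℝ in nhds (0:ℝ), |c| ≤ 1 := by
          filter_upwards [Metric.ball_mem_nhds (0:ℝ) one_pos] with c hc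
          rw [Metric.mem_ball, Real.dist_eq, sub_zero] at hc
          linarith
        filter_upwards [h1.filter_mono nhdsWithin_le_nhds] with c hc1
        have htc : |t c| ≤ 1 := by
          have h3 : |t c| ^ 3 = |c| := by rw [← abs_pow, ht c]
          by_contra hgt
          push_neg at hgt
          have h4 : (1:ℝ) < |t c| ^ 3 := one_lt_pow₀ hgt (by norm_num)
          rw [h3] at h4
          linarith
        have hgc : g c = c ^ 2 * |t c| ^ (2 * m + 2) := by
          rw [show g c = |c ^ 2 * t c ^ (2 * m + 2)| from rfl, abs_mul, abs_pow, abs_pow, sq_abs]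
        rw [hgc]
        have h4 : |t c| ^ (2 * m + 2) ≤ 1 := pow_le_one₀ (abs_nonneg _) htc
        nlinarith [sq_nonneg c]
      have hsq : Filter.Tendsto (fun c : ℝ => c ^ 2) (nhdsWithin (0:ℝ) {(0:ℝ)}ᶜ) (nhds 0) := by
        have : Filter.Tendsto (fun c : ℝ => c ^ 2) (nhds (0:ℝ)) (nhds 0) := by
          simpa using (continuous_pow 2).tendsto (0 : ℝ)
        exact this.mono_left nhdsWithin_le_nhds
      exact squeeze_zero' (Filter.Eventually.of_forall fun c => abs_nonneg _) hb hsq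
    · filter_upwards [self_mem_nhdsWithin] with c hc
      have hc0 : c ≠ 0 := hc
      have : c ^ 2 * t c ^ (2 * m + 2) ≠ 0 :=
        mul_ne_zero (pow_ne_zero _ hc0) (pow_ne_zero _ (htne c hc0))
      exact abs_pos.2 this
  have hinv : Filter.Tendsto (fun c => (g c)⁻¹) (nhdsWithin (0:ℝ) {(0:ℝ)}ᶜ) Filter.atTop :=
    hg0.inv_tendsto_nhdsGT_zero
  have hmul : Filter.Tendsto (fun c => K * (g c)⁻¹) (nhdsWithin (0:ℝ) {(0:ℝ)}ᶜ) Filter.atTop :=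
    hinv.const_mul_atTop hK
  exact hmul.congr' heq
end
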